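/- For every r ≥ 0 and every t > 0, ∫_{ℝ^d} e^{r|ψ|} |K(ψ,t)| dψ ≤ a₁^{d/2} · e^{−b₀ t} · I_{d−1}(νt), where ν := |α|² r² / Re α. -/

import Mathlib

/-!
With `β = Re α / (4|α|²t)` one has `|K(ψ,t)| = (4π|α|t)^{-d/2} e^{-Re δ t} e^{-β|ψ|²}`, so the
weighted integrand is radial. Polar coordinates (surface area `2π^{d/2}/Γ(d/2)` of the unit sphere)
and the substitution `ρ = s/√β` turn the integral into `I_{d-1}` times an explicit constant, with
equality, because `r/√β = 2√(νt)`; the constants collapse to `(|α|/Re α)^{d/2} e^{-Re δ t}`.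
-/

open MeasureTheory

/-- The radial kernel `K(ψ,t) = (4παt)^{-d/2} exp(-δt - |ψ|²/(4αt))`. -/
noncomputable def ouK (d : ℕ) (α δ : ℂ) (ψ : EuclideanSpace ℝ (Fin d)) (t : ℝ) : ℂ :=
  (4 * (Real.pi : ℂ) * α * t) ^ (-(d : ℂ) / 2) *
    Complex.exp (-(δ * t) - ((‖ψ‖ ^ 2 : ℝ) : ℂ) / (4 * α * t))

/-- `I_m(μ) = (2/Γ(d/2)) ∫_0^∞ s^m e^{-s² + 2√μ s} ds`. -/
noncomputable def ouI (d m : ℕ) (μ : ℝ) : ℝ :=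
  (2 / Real.Gamma ((d : ℝ) / 2)) *
    ∫ s in Set.Ioi (0 : ℝ), s ^ m * Real.exp (-s ^ 2 + 2 * Real.sqrt μ * s)

open Real Set Module

theorem sqrt_pi_pow_mul_div_gamma {n : ℕ} (hn : n ≠ 0) :
    n * (√π ^ n / Gamma (n / 2 + 1)) = 2 * π ^ ((n : ℝ) / 2) / Gamma (n / 2) := by
  have hn2 : (n : ℝ) / 2 ≠ 0 := by positivity
  rw [Gamma_add_one hn2, sqrt_eq_rpow, ← rpow_natCast, ← rpow_mul pi_pos.le]
  field_simp

theorem integral_fun_norm_eq_mul_integral_Ioi {E : Type*} [NormedAddCommGroup E]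
    [InnerProductSpace ℝ E] [FiniteDimensional ℝ E] [MeasurableSpace E] [BorelSpace E]
    [Nontrivial E] (f : ℝ → ℝ) :
    ∫ x : E, f ‖x‖ = 2 * π ^ ((finrank ℝ E : ℝ) / 2) / Gamma (finrank ℝ E / 2) *
      ∫ y in Ioi 0, y ^ (finrank ℝ E - 1) * f y := by
  rw [integral_fun_norm_addHaar, measureReal_def, InnerProductSpace.volume_ball,
    ← sqrt_pi_pow_mul_div_gamma finrank_pos.ne']
  simp only [ENNReal.ofReal_one, one_pow, one_mul, nsmul_eq_mul, smul_eq_mul]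
  rw [ENNReal.toReal_ofReal (by positivity)]
  ring

theorem integral_Ioi_pow_mul_exp_sub_mul_sq (m : ℕ) {β : ℝ} (hβ : 0 < β) (r : ℝ) :
    ∫ y in Ioi 0, y ^ m * exp (r * y - β * y ^ 2) =
      (√β ^ (m + 1))⁻¹ * ∫ s in Ioi 0, s ^ m * exp (-s ^ 2 + r / √β * s) := by
  have hsβ : 0 < √β := sqrt_pos.2 hβ
  have hsubst := integral_comp_mul_left_Ioi (fun s => s ^ m * exp (-s ^ 2 + r / √β * s)) 0 hsβ
  have hscale : ∀ y : ℝ, (√β * y) ^ m * exp (-(√β * y) ^ 2 + r / √β * (√β * y)) =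
      √β ^ m * (y ^ m * exp (r * y - β * y ^ 2)) := by
    intro y
    rw [mul_pow, mul_pow, sq_sqrt hβ.le, ← mul_assoc, div_mul_cancel₀ r hsβ.ne']
    ring_nf
  simp only [hscale, integral_const_mul, mul_zero, smul_eq_mul] at hsubst
  rw [pow_succ, mul_inv, mul_assoc, ← hsubst, inv_mul_cancel_left₀ (by positivity)]

theorem Complex.re_inv_four_mul_mul_ofReal (α : ℂ) (t : ℝ) :
    ((4 * α * t)⁻¹).re = α.re / (4 * ‖α‖ ^ 2 * t) := by
  rw [Complex.inv_re, Complex.normSq_eq_norm_sq]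
  simp only [norm_mul, Complex.norm_ofNat, Complex.norm_real, Real.norm_eq_abs, mul_pow, sq_abs,
    Complex.mul_re, Complex.ofReal_re, Complex.ofReal_im, Complex.re_ofNat, Complex.im_ofNat]
  rcases eq_or_ne t 0 with rfl | ht
  · simp
  rcases eq_or_ne α 0 with rfl | hα
  · simp
  field_simp
  ring

theorem norm_ouK (d : ℕ) (α δ : ℂ) (ψ : EuclideanSpace ℝ (Fin d)) {t : ℝ} (ht : 0 < t) :
    ‖ouK d α δ ψ t‖ = (4 * π * ‖α‖ * t) ^ (-(d : ℝ) / 2) * exp (-δ.re * t) *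
      exp (-(α.re / (4 * ‖α‖ ^ 2 * t)) * ‖ψ‖ ^ 2) := by
  have hpow : -(d : ℂ) / 2 = ((-(d : ℝ) / 2 : ℝ) : ℂ) := by push_cast; ring
  have hnorm : ‖4 * (π : ℂ) * α * t‖ = 4 * π * ‖α‖ * t := by
    simp [abs_of_pos pi_pos, abs_of_pos ht]
  rw [ouK, norm_mul, hpow, Complex.norm_cpow_real, hnorm, Complex.norm_exp,
    mul_assoc _ (exp _), ← exp_add]
  congr 2
  rw [div_eq_mul_inv, Complex.sub_re, Complex.neg_re, Complex.re_ofReal_mul,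
    Complex.re_inv_four_mul_mul_ofReal]
  simp only [Complex.mul_re, Complex.ofReal_re, Complex.ofReal_im, mul_zero, sub_zero, neg_mul]
  ring

theorem div_sqrt_eq_two_mul_sqrt {r : ℝ} (hr : 0 ≤ r) (β : ℝ) :
    r / √β = 2 * √(r ^ 2 / (4 * β)) := by
  rw [show r ^ 2 / (4 * β) = (r / 2) ^ 2 / β by ring, sqrt_div (by positivity),
    sqrt_sq (by positivity)]
  ring

theorem rpow_neg_mul_pi_rpow_div_sqrt_pow {A a t : ℝ} (hA : 0 < A) (ha : 0 < a) (ht : 0 < t)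
    (d : ℕ) :
    (4 * π * A * t) ^ (-(d : ℝ) / 2) * π ^ ((d : ℝ) / 2) / √(a / (4 * A ^ 2 * t)) ^ d =
      (A / a) ^ ((d : ℝ) / 2) := by
  have hβ : 0 < a / (4 * A ^ 2 * t) := by positivity
  rw [sqrt_eq_rpow, ← rpow_natCast, ← rpow_mul hβ.le, show 1 / 2 * (d : ℝ) = d / 2 by ring,
    neg_div, rpow_neg (by positivity), ← inv_rpow (by positivity),
    ← mul_rpow (by positivity) pi_pos.le, ← div_rpow (by positivity) hβ.le]
  congr 1
  field_simp

/-- exponentially weighted integral bound for the radial kernel `K`. -/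
theorem ouK_exp_weighted_integral_bound
    (d : ℕ) (hd : 1 ≤ d) (α δ : ℂ) (hα : 0 < α.re)
    (r : ℝ) (hr : 0 ≤ r) (t : ℝ) (ht : 0 < t) :
    (∫ ψ : EuclideanSpace ℝ (Fin d), Real.exp (r * ‖ψ‖) * ‖ouK d α δ ψ t‖)
      ≤ (‖α‖ / α.re) ^ ((d : ℝ) / 2) * Real.exp (-δ.re * t) *
        ouI d (d - 1) ((‖α‖ ^ 2 * r ^ 2 / α.re) * t) := by
  have : Nonempty (Fin d) := ⟨⟨0, hd⟩⟩
  have hαnorm : 0 < ‖α‖ := norm_pos_iff.2 fun h => by simp [h] at hα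
  set β := α.re / (4 * ‖α‖ ^ 2 * t)
  have hβ : 0 < β := by positivity
  set C := (4 * π * ‖α‖ * t) ^ (-(d : ℝ) / 2) * exp (-δ.re * t)
  have hpt (ψ : EuclideanSpace ℝ (Fin d)) :
      exp (r * ‖ψ‖) * ‖ouK d α δ ψ t‖ = C * exp (r * ‖ψ‖ - β * ‖ψ‖ ^ 2) := by
    simp only [C, β]
    rw [norm_ouK d α δ ψ ht, sub_eq_add_neg, exp_add, ← neg_mul]
    ring
  have hμ : r / √β = 2 * √(‖α‖ ^ 2 * r ^ 2 / α.re * t) := by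
    rw [div_sqrt_eq_two_mul_sqrt hr]
    congr 2
    simp only [β]
    field_simp
  apply le_of_eq
  rw [integral_congr_ae (ae_of_all _ hpt), integral_const_mul,
    integral_fun_norm_eq_mul_integral_Ioi (fun y => exp (r * y - β * y ^ 2)),
    finrank_euclideanSpace_fin, integral_Ioi_pow_mul_exp_sub_mul_sq _ hβ,
    Nat.sub_add_cancel hd, hμ, ouI, ← rpow_neg_mul_pi_rpow_div_sqrt_pow hαnorm hα ht d]
  ring
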